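/- arXiv:math/0408180 — 5 statements merged into one kernel-verified Lean document; each statement's English description precedes it below -/
import Mathlib

section
/- Let R be a commutative ring of characteristic p > 0 that admits a Frobenius splitting φ, and let I be a radical ideal compatibly split by φ. Then every minimal prime ideal over I is compatibly split by φ. -/
/-- If a radical ideal `I` is compatibly split by a Frobenius splitting `φ`,
then every minimal prime over `I` is compatibly split by `φ`. -/
theorem stmt4 (R : Type*) [CommRing R] [IsNoetherianRing R]
    (p : ℕ) (hp : p.Prime) [CharP R p]
    (φ : R →+ R)
    (hlin : ∀ r x : R, φ (r ^ p * x) = r * φ x) (hone : φ 1 = 1)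
    (I : Ideal R) (hrad : I.IsRadical) (hI : ∀ x ∈ I, φ x ∈ I)
    (P : Ideal R) (hP : P ∈ I.minimalPrimes) :
    ∀ x ∈ P, φ x ∈ P := by
  classical
  have hPprime : P.IsPrime := hP.1.1
  have hIP : I ≤ P := hP.1.2
  -- I is the intersection of its minimal primes
  have hsInf : sInf I.minimalPrimes = I := by
    rw [Ideal.sInf_minimalPrimes, hrad.radical]
  -- finiteness of minimal primes
  have hfin : I.minimalPrimes.Finite := by
    rw [Ideal.minimalPrimes_eq_comap]
    exact ((minimalPrimes.finite_of_isNoetherianRing (R ⧸ I)).image _)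
  -- for each other minimal prime, pick an element not in P
  have key : ∀ Q ∈ I.minimalPrimes, Q ≠ P → ∃ c, c ∈ Q ∧ c ∉ P := by
    intro Q hQ hne
    by_contra h
    push_neg at h
    have hle : Q ≤ P := fun c hc => h c hc
    exact hne (le_antisymm hle (hP.2 ⟨hQ.1.1, hQ.1.2⟩ hle))
  let g : Ideal R → R := fun Q =>
    if h : Q ∈ I.minimalPrimes ∧ Q ≠ P then (key Q h.1 h.2).choose else 1
  have hg1 : ∀ Q ∈ I.minimalPrimes, Q ≠ P → g Q ∈ Q := by
    intro Q hQ hne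
    have h' : Q ∈ I.minimalPrimes ∧ Q ≠ P := ⟨hQ, hne⟩
    simp only [g, dif_pos h']
    exact (key Q hQ hne).choose_spec.1
  have hg2 : ∀ Q, g Q ∉ P := by
    intro Q
    by_cases h : Q ∈ I.minimalPrimes ∧ Q ≠ P
    · simp only [g, dif_pos h]
      exact (key Q h.1 h.2).choose_spec.2
    · simp only [g, dif_neg h]
      exact fun h1 => hPprime.ne_top ((Ideal.eq_top_iff_one _).mpr h1)
  let S : Finset (Ideal R) := hfin.toFinset.erase P
  let c : R := ∏ Q ∈ S, g Q
  have hcP : c ∉ P := by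
    intro hc
    obtain ⟨Q, -, hQ⟩ := Ideal.IsPrime.prod_mem_iff.mp hc
    exact hg2 Q hQ
  intro x hx
  -- c^p * x ∈ I
  have hcx : c ^ p * x ∈ I := by
    rw [← hsInf]
    apply Ideal.mem_sInf.mpr
    intro Q hQ
    by_cases hne : Q = P
    · subst hne; exact Ideal.mul_mem_left _ _ hx
    · have hcQ : c ∈ Q := by
        have : g Q ∣ c := Finset.dvd_prod_of_mem g (by
          simp [S, Set.Finite.mem_toFinset, hne, hQ])
        obtain ⟨d, hd⟩ := this
        rw [hd]
        exact Ideal.mul_mem_right _ _ (hg1 Q hQ hne)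
      exact Ideal.mul_mem_right _ _ (Ideal.pow_mem_of_mem _ hcQ p hp.pos)
  have : c * φ x ∈ P := hIP (by rw [← hlin]; exact hI _ hcx)
  exact (hPprime.mem_or_mem this).resolve_left hcP
end

section
/- Let M be a monoid in which every element is both left- and right-cancellable, embedded as a Zariski-closed submonoid of the matrix monoid M_n(k) over a field k. If γ ∈ M is invertible in M_n(k), then γ is invertible in M (i.e. the unit group of M equals M ∩ GL_n(k)), assuming the descending chains γ^i M and M γ^i of Zariski-closed subsets stabilize. -/
open scoped Pointwise

/-- Let `M` be a cancellative submonoid of the matrix monoid over a field `k`.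
If `γ ∈ M` is an invertible matrix and the descending chains `γ^i M` and `M γ^i`
stabilize, then `γ` is invertible inside `M`. -/
theorem stmt9 (k : Type*) [Field k] (n : ℕ)
    (M : Submonoid (Matrix (Fin n) (Fin n) k))
    (hcancel : ∀ γ ∈ M, (∀ a b : Matrix (Fin n) (Fin n) k,
      a ∈ M → b ∈ M → γ * a = γ * b → a = b) ∧
      (∀ a b : Matrix (Fin n) (Fin n) k, a ∈ M → b ∈ M → a * γ = b * γ → a = b))
    (γ : Matrix (Fin n) (Fin n) k) (hγ : γ ∈ M) (hinv : IsUnit γ)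
    (i j : ℕ)
    (hl : γ ^ i • (M : Set (Matrix (Fin n) (Fin n) k))
      = γ ^ (i + 1) • (M : Set (Matrix (Fin n) (Fin n) k)))
    (hr : MulOpposite.op (γ ^ j) • (M : Set (Matrix (Fin n) (Fin n) k))
      = MulOpposite.op (γ ^ (j + 1)) • (M : Set (Matrix (Fin n) (Fin n) k))) :
    ∃ δ ∈ M, γ * δ = 1 ∧ δ * γ = 1 := by
  obtain ⟨u, hu⟩ := hinv
  have hui : IsUnit (γ ^ i) := (hu ▸ u.isUnit).pow i
  have huj : IsUnit (γ ^ j) := (hu ▸ u.isUnit).pow j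
  -- left stabilization gives a right inverse
  have h1 : γ ^ i ∈ γ ^ (i + 1) • (M : Set (Matrix (Fin n) (Fin n) k)) := by
    rw [← hl]
    exact ⟨1, M.one_mem, by simp⟩
  obtain ⟨m, hm, hmeq⟩ := h1
  have hγm : γ * m = 1 := by
    have : γ ^ i * (γ * m) = γ ^ i * 1 := by
      simp only [smul_eq_mul] at hmeq
      rw [mul_one, ← mul_assoc, ← pow_succ, hmeq]
    exact hui.mul_left_cancel this
  -- right stabilization gives a left inverse
  have h2 : γ ^ j ∈ MulOpposite.op (γ ^ (j + 1)) • (M : Set (Matrix (Fin n) (Fin n) k)) := by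
    rw [← hr]
    exact ⟨1, M.one_mem, by simp⟩
  obtain ⟨m', hm', hmeq'⟩ := h2
  have hγm' : m' * γ = 1 := by
    have : (m' * γ) * γ ^ j = 1 * γ ^ j := by
      simp only [MulOpposite.smul_eq_mul_unop, MulOpposite.unop_op] at hmeq'
      rw [one_mul, mul_assoc, ← pow_succ']
      exact hmeq'
    exact huj.mul_right_cancel this
  have hmm : m' = m := by
    calc m' = m' * (γ * m) := by rw [hγm, mul_one]
    _ = (m' * γ) * m := by rw [mul_assoc]
    _ = m := by rw [hγm', one_mul]
  exact ⟨m, hm, hγm, hmm ▸ hγm'⟩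
end

section
/- In the Weyl group W of a root system (more generally, in any Coxeter group with longest element or any Coxeter group), if w ∈ W satisfies ℓ(w) ≤ ℓ(w₀) − 2 where w₀ is the longest element, then there exist distinct elements w₁ ≠ w₂ in W with w < w₁, w < w₂ (Bruhat order) and ℓ(w₁) = ℓ(w₂) = ℓ(w) + 1. -/
/-- The Bruhat order on a Coxeter group: `u < w` iff `w` can be obtained from `u`
by successively multiplying on the right by reflections, each step increasing the
length. -/
def bruhatLT {B W : Type*} [Group W] {M : CoxeterMatrix B} (cs : CoxeterSystem M W)
    (u w : W) : Prop :=
  Relation.TransGen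
    (fun x y => ∃ t : W, cs.IsReflection t ∧ y = x * t ∧ cs.length x < cs.length y) u w

/-!
The sign cocycle behind the strong exchange condition does the work. The simple reflection
`sᵢ` acts on `W × ℤˣ` by `(t, ε) ↦ (sᵢ t sᵢ, ±ε)`, the sign flipping exactly at `t = sᵢ`;
these involutions satisfy the Coxeter relations, so `w` acts by `(t, ε) ↦ (w t w⁻¹, η(w, t) ε)`
for a cocycle `η`, and for a reflection `t` one has `η(w, t) = -1` exactly when
`ℓ(w t) < ℓ(w)`. Every reflection is a right inversion of the longest element, so the cocycle
rule gives `ℓ(w₀ x) = ℓ(w₀) - ℓ(x)`. Hence `w t` covers `w` as soon as `ℓ(u t) = ℓ(u) - 1`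
for `u = w₀ w`, an element of length at least 2. Deleting the first or the last letter of a
reduced word of `u` realises this for two reflections `t`, distinct because the right inversion
sequence of a reduced word has no repetitions.
-/

section ConjSign

open Finset

variable {G : Type*} [Group G] [DecidableEq G]

def conjSign (x : G) : Equiv.Perm (G × ℤˣ) where
  toFun p := (x * p.1 * x⁻¹, (if p.1 = x then -1 else 1) * p.2)
  invFun p := (x⁻¹ * p.1 * x, (if p.1 = x then -1 else 1) * p.2)
  left_inv := by
    rintro ⟨t, ε⟩
    by_cases h : t = x <;> simp [h, mul_assoc, mul_inv_eq_iff_eq_mul]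
  right_inv := by
    rintro ⟨t, ε⟩
    by_cases h : t = x <;> simp [h, mul_assoc, inv_mul_eq_iff_eq_mul]

theorem conjSign_apply (x t : G) (ε : ℤˣ) :
    conjSign x (t, ε) = (x * t * x⁻¹, (if t = x then -1 else 1) * ε) := rfl

variable {α β : G} (hα : α * α = 1)
include hα

theorem conjSign_mul_conjSign_apply (t : G) (ε : ℤˣ) :
    (conjSign α * conjSign β) (t, ε) = (α * β * t * (α * β)⁻¹,
      (if α * β * t = β then -1 else 1) * (if t = β then -1 else 1) * ε) := by
  have hiff : β * t * β⁻¹ = α ↔ α * β * t = β :=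
    calc _ ↔ t = β⁻¹ * α * β := by constructor <;> rintro rfl <;> group
      _ ↔ t = (α * β)⁻¹ * β := by rw [mul_inv_rev, inv_eq_of_mul_eq_one_left hα]
      _ ↔ _ := eq_inv_mul_iff_mul_eq
  rw [Equiv.Perm.mul_apply, conjSign_apply, conjSign_apply, if_congr hiff rfl rfl]
  simp only [mul_inv_rev, mul_assoc]

variable (hβ : β * β = 1)
include hβ

theorem conjSign_mul_pow (k : ℕ) (t : G) (ε : ℤˣ) :
    ((conjSign α * conjSign β) ^ k) (t, ε) =
      ((α * β) ^ k * t * ((α * β) ^ k)⁻¹,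
        (∏ b ∈ range (2 * k), if (α * β) ^ b * t = β then -1 else 1) * ε) := by
  induction k generalizing t ε with
  | zero => simp
  | succ k ih =>
    rw [pow_succ, Equiv.Perm.mul_apply, conjSign_mul_conjSign_apply hα, ih,
      show 2 * (k + 1) = 2 * k + 1 + 1 by ring, prod_range_succ', prod_range_succ']
    set c := α * β
    have hβc : β * c = c⁻¹ * β := by
      simp only [c, mul_inv_rev, inv_eq_of_mul_eq_one_left hα, inv_eq_of_mul_eq_one_left hβ,
        mul_assoc]
    have hshift (b : ℕ) : c ^ b * (c * t * c⁻¹) = β ↔ c ^ (b + 1 + 1) * t = β := by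
      rw [← mul_assoc, ← mul_assoc, mul_inv_eq_iff_eq_mul, hβc, eq_inv_mul_iff_mul_eq,
        ← mul_assoc, ← mul_assoc, ← pow_succ', ← pow_succ]
    simp only [hshift, zero_add, pow_one, pow_zero, one_mul]
    ext
    · group
    · simp only [mul_assoc, mul_comm]

theorem conjSign_mul_pow_eq_one {m : ℕ} (hm : (α * β) ^ m = 1) :
    (conjSign α * conjSign β) ^ m = 1 := by
  ext ⟨t, ε⟩ <;> rw [conjSign_mul_pow hα hβ]
  · simp [hm]
  · have hper (b : ℕ) : (α * β) ^ (m + b) = (α * β) ^ b := by rw [pow_add, hm, one_mul]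
    rw [two_mul, prod_range_add]
    simp only [hper, Int.units_mul_self, one_mul, Equiv.Perm.one_apply]

end ConjSign

namespace CoxeterSystem

variable {B W : Type*} [Group W] {M : CoxeterMatrix B} (cs : CoxeterSystem M W)

open scoped Classical

noncomputable def signRep : W →* Equiv.Perm (W × ℤˣ) :=
  cs.lift ⟨fun i => conjSign (cs.simple i), fun i j =>
    conjSign_mul_pow_eq_one (cs.simple_mul_simple_self i) (cs.simple_mul_simple_self j)
      (cs.simple_mul_simple_pow i j)⟩

theorem signRep_simple (i : B) : cs.signRep (cs.simple i) = conjSign (cs.simple i) :=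
  cs.lift_apply_simple _ i

noncomputable def inversionSign (w t : W) : ℤˣ := (cs.signRep w (t, 1)).2

theorem signRep_apply (w t : W) (ε : ℤˣ) :
    cs.signRep w (t, ε) = (w * t * w⁻¹, cs.inversionSign w t * ε) := by
  induction w using cs.simple_induction_left generalizing ε with
  | one => simp [inversionSign]
  | mul_simple_left w i ih =>
    have h (ε : ℤˣ) : cs.signRep (cs.simple i * w) (t, ε) =
        (cs.simple i * w * t * (cs.simple i * w)⁻¹,
          (if w * t * w⁻¹ = cs.simple i then -1 else 1) * (cs.inversionSign w t * ε)) := by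
      rw [map_mul, Equiv.Perm.mul_apply, ih, signRep_simple, conjSign_apply]
      simp only [mul_inv_rev, mul_assoc]
    have hsign : cs.inversionSign (cs.simple i * w) t =
        (if w * t * w⁻¹ = cs.simple i then -1 else 1) * cs.inversionSign w t :=
      (congrArg Prod.snd (h 1)).trans (by rw [mul_one])
    rw [h, hsign, ← mul_assoc]

theorem inversionSign_mul (u v t : W) :
    cs.inversionSign (u * v) t = cs.inversionSign u (v * t * v⁻¹) * cs.inversionSign v t := by
  rw [inversionSign, map_mul, Equiv.Perm.mul_apply, signRep_apply, signRep_apply, mul_one]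

@[simp]
theorem inversionSign_one (t : W) : cs.inversionSign 1 t = 1 := by
  simp [inversionSign]

theorem inversionSign_simple (i : B) (t : W) :
    cs.inversionSign (cs.simple i) t = if t = cs.simple i then -1 else 1 := by
  rw [inversionSign, signRep_simple, conjSign_apply, mul_one]

theorem inversionSign_self {t : W} (ht : cs.IsReflection t) : cs.inversionSign t t = -1 := by
  obtain ⟨v, i, rfl⟩ := ht
  have hconj : v⁻¹ * (v * cs.simple i * v⁻¹) * v⁻¹⁻¹ = cs.simple i := by group
  have hcancel := cs.inversionSign_mul v v⁻¹ (v * cs.simple i * v⁻¹)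
  rw [mul_inv_cancel, inversionSign_one, hconj] at hcancel
  rw [inversionSign_mul, hconj, inversionSign_mul, inversionSign_simple, if_pos rfl,
    mul_inv_cancel_right, mul_neg_one, neg_mul, ← hcancel]

theorem inversionSign_mul_self {w t : W} (ht : cs.IsReflection t) :
    cs.inversionSign (w * t) t = - cs.inversionSign w t := by
  rw [inversionSign_mul, inversionSign_self cs ht, ht.inv, mul_assoc, ht.mul_self, mul_one,
    mul_neg_one]

theorem inversionSign_wordProd_of_not_mem {ω : List B} {t : W} (ht : t ∉ cs.rightInvSeq ω) :
    cs.inversionSign (cs.wordProd ω) t = 1 := by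
  induction ω with
  | nil => simp
  | cons i ω ih =>
    simp only [rightInvSeq, List.mem_cons, not_or] at ht
    rw [wordProd_cons, inversionSign_mul, inversionSign_simple, ih ht.2, if_neg, one_mul]
    rintro h
    apply ht.1
    rw [← h]
    group

theorem isRightInversion_of_inversionSign_eq_neg_one {w t : W}
    (h : cs.inversionSign w t = -1) : cs.IsRightInversion w t := by
  obtain ⟨ω, hω, rfl⟩ := cs.exists_isReduced w
  by_cases ht : t ∈ cs.rightInvSeq ω
  · exact cs.isRightInversion_of_mem_rightInvSeq hω ht
  · rw [inversionSign_wordProd_of_not_mem cs ht] at h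
    exact absurd h (by decide)

theorem isRightInversion_iff_inversionSign_eq_neg_one {w t : W} (ht : cs.IsReflection t) :
    cs.IsRightInversion w t ↔ cs.inversionSign w t = -1 := by
  refine ⟨fun hwt => ?_, cs.isRightInversion_of_inversionSign_eq_neg_one⟩
  rcases Int.units_eq_one_or (cs.inversionSign w t) with h | h
  · have := cs.isRightInversion_of_inversionSign_eq_neg_one
      (by rw [inversionSign_mul_self cs ht, h] : cs.inversionSign (w * t) t = -1)
    exact absurd hwt (ht.isRightInversion_mul_left_iff.mp this)
  · exact h

theorem inversionSign_eq_one_iff {w t : W} (ht : cs.IsReflection t) :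
    cs.inversionSign w t = 1 ↔ ¬cs.IsRightInversion w t := by
  rw [isRightInversion_iff_inversionSign_eq_neg_one cs ht]
  rcases Int.units_eq_one_or (cs.inversionSign w t) with h | h <;> simp [h]

theorem length_mul_add_length_of_forall_length_le {w₀ : W}
    (hw₀ : ∀ v, cs.length v ≤ cs.length w₀) (x : W) :
    cs.length (w₀ * x) + cs.length x = cs.length w₀ := by
  induction hx : cs.length x generalizing x with
  | zero => simp [cs.length_eq_zero_iff.mp hx]
  | succ n ih =>
    obtain ⟨i, hi⟩ := cs.exists_rightDescent_of_ne_one (w := x) (by rintro rfl; simp at hx)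
    obtain ⟨x, rfl⟩ : ∃ x', x = x' * cs.simple i :=
      ⟨x * cs.simple i, (cs.simple_mul_simple_cancel_right i).symm⟩
    rw [IsRightDescent, cs.simple_mul_simple_cancel_right] at hi
    have hlen := cs.length_mul_simple x i
    have hdesc : cs.IsRightInversion (w₀ * x) (cs.simple i) := by
      have hw₀t : cs.IsRightInversion w₀ (x * cs.simple i * x⁻¹) :=
        ⟨(cs.isReflection_simple i).conj x, lt_of_le_of_ne (hw₀ _)
          (((cs.isReflection_simple i).conj x).length_mul_left_ne w₀)⟩
      have hxt : ¬cs.IsRightInversion x (cs.simple i) := fun h => lt_asymm h.2 hi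
      rw [isRightInversion_iff_inversionSign_eq_neg_one cs (cs.isReflection_simple i),
        inversionSign_mul, (isRightInversion_iff_inversionSign_eq_neg_one cs hw₀t.1).mp hw₀t,
        (inversionSign_eq_one_iff cs (cs.isReflection_simple i)).mpr hxt, mul_one]
    have hIH := ih x (by omega)
    have hstep := cs.length_mul_simple (w₀ * x) i
    rw [← mul_assoc]
    unfold IsRightInversion at hdesc
    omega

theorem exists_ne_reflections_length_mul_add_one_eq {u : W} (hu : 2 ≤ cs.length u) :
    ∃ t₁ t₂ : W, t₁ ≠ t₂ ∧ cs.IsReflection t₁ ∧ cs.IsReflection t₂ ∧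
      cs.length (u * t₁) + 1 = cs.length u ∧ cs.length (u * t₂) + 1 = cs.length u := by
  obtain ⟨ω, hω, rfl⟩ := cs.exists_isReduced u
  have hn : 2 ≤ ω.length := hω ▸ hu
  have hlen (j : ℕ) (hj : j < ω.length) (hred : cs.IsReduced (ω.eraseIdx j)) :
      cs.length (cs.wordProd ω * (cs.rightInvSeq ω)[j]'(by simpa using hj)) + 1 =
        cs.length (cs.wordProd ω) := by
    rw [← List.getD_eq_getElem _ 1, wordProd_mul_getD_rightInvSeq, hred,
      List.length_eraseIdx_add_one hj, hω]
  refine ⟨_, _, ?_, cs.isReflection_of_mem_rightInvSeq ω (List.getElem_mem _),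
    cs.isReflection_of_mem_rightInvSeq ω (List.getElem_mem _), hlen 0 (by omega) ?_,
    hlen (ω.length - 1) (by omega) ?_⟩
  · rw [Ne, hω.nodup_rightInvSeq.getElem_inj_iff]
    omega
  · rw [List.eraseIdx_zero, ← List.drop_one]
    exact hω.drop 1
  · rw [List.eraseIdx_length_sub_one, List.dropLast_eq_take]
    exact hω.take _

end CoxeterSystem

theorem stmt10_general {B W : Type*} [Group W] {M : CoxeterMatrix B}
    (cs : CoxeterSystem M W)
    (w₀ : W) (hw₀ : ∀ v : W, cs.length v ≤ cs.length w₀)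
    (w : W) (hw : cs.length w + 2 ≤ cs.length w₀) :
    ∃ w₁ w₂ : W, w₁ ≠ w₂ ∧ bruhatLT cs w w₁ ∧ bruhatLT cs w w₂ ∧
      cs.length w₁ = cs.length w + 1 ∧ cs.length w₂ = cs.length w + 1 := by
  have hdual := cs.length_mul_add_length_of_forall_length_le hw₀
  have hcover {t : W} (ht : cs.IsReflection t)
      (hl : cs.length (w₀ * w * t) + 1 = cs.length (w₀ * w)) :
      bruhatLT cs w (w * t) ∧ cs.length (w * t) = cs.length w + 1 := by
    rw [mul_assoc] at hl
    have hlen_w := hdual w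
    have hlen_wt := hdual (w * t)
    exact ⟨.single ⟨t, ht, rfl, by omega⟩, by omega⟩
  obtain ⟨t₁, t₂, hne, ht₁, ht₂, hl₁, hl₂⟩ :=
    cs.exists_ne_reflections_length_mul_add_one_eq (u := w₀ * w) (by linarith [hdual w])
  obtain ⟨hw₁, hlen₁⟩ := hcover ht₁ hl₁
  obtain ⟨hw₂, hlen₂⟩ := hcover ht₂ hl₂
  exact ⟨w * t₁, w * t₂, fun h => hne (mul_left_cancel h), hw₁, hw₂, hlen₁, hlen₂⟩

/-- In a finite Coxeter group `W` with longest element `w₀`, any element `w` with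
`ℓ(w) ≤ ℓ(w₀) - 2` has at least two distinct covers in the Bruhat order: there exist
`w₁ ≠ w₂` with `w < w₁`, `w < w₂` and `ℓ(w₁) = ℓ(w₂) = ℓ(w) + 1`
(Lemma 10.3 of Bernstein--Gelfand--Gelfand). -/
theorem stmt10 {B W : Type*} [Group W] [Finite W] {M : CoxeterMatrix B}
    (cs : CoxeterSystem M W)
    (w₀ : W) (hw₀ : ∀ v : W, cs.length v ≤ cs.length w₀)
    (w : W) (hw : cs.length w + 2 ≤ cs.length w₀) :
    ∃ w₁ w₂ : W, w₁ ≠ w₂ ∧ bruhatLT cs w w₁ ∧ bruhatLT cs w w₂ ∧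
      cs.length w₁ = cs.length w + 1 ∧ cs.length w₂ = cs.length w + 1 :=
  stmt10_general cs w₀ hw₀ w hw
end

section
/- Let R be a commutative ring of characteristic p > 0, and suppose R admits a 'stable Frobenius splitting along s^a and along t^b' in the following sense: there exist n, m ≥ 1 and R-linear maps φ : F_*^n R → R splitting r ↦ r^{p^n} s and φ' : F_*^m R → R splitting r ↦ r^{p^m} t. Then there exists N ≥ 1 and an R-linear map ψ : F_*^N R → R splitting r ↦ r^{p^N} s t^{p^n}. -/
/-- Stable Frobenius splittings compose: if `R` admits a stable splitting `φ` along
`s` (with exponent `n`) and a stable splitting `φ'` along `t` (with exponent `m`),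
then it admits a stable splitting along `s * t^(p^n)`. -/
theorem stmt13 (R : Type*) [CommRing R] (p : ℕ) (hp : p.Prime) [CharP R p]
    (s t : R) (n m : ℕ) (hn : 1 ≤ n) (hm : 1 ≤ m)
    (φ φ' : R →+ R)
    (hφlin : ∀ r x : R, φ (r ^ p ^ n * x) = r * φ x) (hφs : φ s = 1)
    (hφ'lin : ∀ r x : R, φ' (r ^ p ^ m * x) = r * φ' x) (hφ't : φ' t = 1) :
    ∃ (N : ℕ) (ψ : R →+ R), 1 ≤ N ∧
      (∀ r x : R, ψ (r ^ p ^ N * x) = r * ψ x) ∧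
      ψ (s * t ^ p ^ n) = 1 := by
  refine ⟨n + m, φ'.comp φ, le_add_right hn, ?_, ?_⟩
  · intro r x
    simp only [AddMonoidHom.coe_comp, Function.comp_apply]
    rw [pow_add, mul_comm (p ^ n), pow_mul, hφlin, hφ'lin]
  · simp only [AddMonoidHom.coe_comp, Function.comp_apply]
    rw [mul_comm, hφlin, hφs, mul_one, hφ't]
end

section
/- Let k be an algebraically closed field of characteristic p > 0 and let R be a finitely generated k-algebra. If R is strongly F-regular, then the polynomial ring R[x] is strongly F-regular. -/
/-- A commutative ring `R` of characteristic `p` is strongly `F`-regular if for every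
`s ∈ R` not contained in any minimal prime, there exist `n ≥ 1` and an additive map
`φ : F_*^n R → R` which is `R`-linear for the Frobenius-twisted module structure and
satisfies `φ(s) = 1` (i.e. `φ` splits `r ↦ r^(p^n) * s`). -/
def StronglyFRegular (p : ℕ) (R : Type*) [CommRing R] : Prop :=
  ∀ s : R, (∀ P ∈ minimalPrimes R, s ∉ P) →
    ∃ (n : ℕ) (φ : R →+ R), 1 ≤ n ∧
      (∀ r x : R, φ (r ^ p ^ n * x) = r * φ x) ∧ φ s = 1

open Polynomial in
/-- The basic Frobenius-twisted "coefficient extraction" map on `R[x]`: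
pick out coefficients in degrees `≡ i mod q`, multiply by `c`, apply `χ`. -/
private noncomputable def psiFun {R : Type*} [CommRing R] (χ : R →+ R) (q i : ℕ) (c : R)
    (f : R[X]) : R[X] :=
  f.sum fun l a => if l % q = i then C (χ (c * a)) * X ^ ((l - i) / q) else 0

private lemma psiFun_add {R : Type*} [CommRing R] (χ : R →+ R) (q i : ℕ) (c : R)
    (f g : Polynomial R) :
    psiFun χ q i c (f + g) = psiFun χ q i c f + psiFun χ q i c g := by
  unfold psiFun
  refine Polynomial.sum_add_index f g _ (fun l => by simp) (fun l a b => by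
    split_ifs with h <;> simp [mul_add, map_add, add_mul])

private lemma psiFun_monomial {R : Type*} [CommRing R] (χ : R →+ R) (q i : ℕ) (c : R)
    (m : ℕ) (x : R) :
    psiFun χ q i c (Polynomial.monomial m x)
      = if m % q = i then Polynomial.C (χ (c * x)) * Polynomial.X ^ ((m - i) / q) else 0 :=
  Polynomial.sum_monomial_index x _ (by simp)

private lemma psiFun_twisted {p : ℕ} [Fact p.Prime] {R : Type*} [CommRing R] [CharP R p]
    (χ : R →+ R) (e : ℕ) (i : ℕ) (c : R)
    (hχ : ∀ b x : R, χ (b ^ p ^ e * x) = b * χ x) :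
    ∀ r f : Polynomial R, psiFun χ (p ^ e) i c (r ^ p ^ e * f) = r * psiFun χ (p ^ e) i c f := by
  intro r f
  induction r using Polynomial.induction_on' with
  | add r1 r2 h1 h2 =>
      rw [add_pow_char_pow, add_mul, psiFun_add, h1, h2, add_mul]
  | monomial u b =>
      induction f using Polynomial.induction_on' with
      | add f1 f2 h1 h2 => rw [mul_add, psiFun_add, h1, h2, psiFun_add, mul_add]
      | monomial v a =>
          rw [Polynomial.monomial_pow, Polynomial.monomial_mul_monomial, psiFun_monomial,
            psiFun_monomial,
            show (u * p ^ e + v) % p ^ e = v % p ^ e by rw [mul_comm]; exact Nat.mul_add_mod _ _ _]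
          by_cases hv : v % p ^ e = i
          · rw [if_pos hv, if_pos hv]
            have hq : 0 < p ^ e := pow_pos (Fact.out (p := p.Prime)).pos e
            have hiv : i ≤ v := hv ▸ Nat.mod_le v (p ^ e)
            have hdiv : (u * p ^ e + v - i) / p ^ e = u + (v - i) / p ^ e := by
              rw [Nat.add_sub_assoc hiv, mul_comm u, Nat.mul_add_div hq]
            have hval : c * (b ^ p ^ e * a) = b ^ p ^ e * (c * a) := by ring
            rw [hdiv, hval, hχ]
            rw [← Polynomial.C_mul_X_pow_eq_monomial (n := u) (a := b)]
            rw [Polynomial.C_mul, pow_add]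
            ring
          · rw [if_neg hv, if_neg hv, mul_zero]

private lemma psiFun_eval {R : Type*} [CommRing R] (χ : R →+ R) (q i : ℕ) (c : R)
    (s : Polynomial R) (hdeg : s.natDegree < q) :
    psiFun χ q i c s = Polynomial.C (χ (c * s.coeff i)) := by
  classical
  unfold psiFun
  rw [Polynomial.sum_def]
  have hcongr : ∀ l ∈ s.support,
      (if l % q = i then Polynomial.C (χ (c * s.coeff l)) * Polynomial.X ^ ((l - i) / q) else 0)
        = if l = i then Polynomial.C (χ (c * s.coeff i)) else 0 := by
    intro l hl
    have hlq : l < q := lt_of_le_of_lt (Polynomial.le_natDegree_of_mem_supp l hl) hdeg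
    rw [Nat.mod_eq_of_lt hlq]
    by_cases hli : l = i
    · subst hli; simp
    · rw [if_neg hli, if_neg hli]
  rw [Finset.sum_congr rfl hcongr, Finset.sum_ite_eq' s.support i _]
  by_cases hi : i ∈ s.support
  · rw [if_pos hi]
  · rw [if_neg hi]
    have h0 : s.coeff i = 0 := Polynomial.notMem_support_iff.mp hi
    simp [h0]

/-- Amplification: a Frobenius splitting of `w` of exponent `n` can be upgraded to one of
exponent `(k+1)*n` for every `k`. -/
private lemma amplify {p n : ℕ} {R : Type*} [CommRing R] (w : R) (ψ : R →+ R)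
    (hψ : ∀ r x : R, ψ (r ^ p ^ n * x) = r * ψ x) (hw : ψ w = 1) (k : ℕ) :
    ∃ χ : R →+ R, (∀ r x : R, χ (r ^ p ^ ((k + 1) * n) * x) = r * χ x) ∧ χ w = 1 := by
  induction k with
  | zero => exact ⟨ψ, by simpa using hψ, hw⟩
  | succ k ih =>
      obtain ⟨χ, hχ, hχw⟩ := ih
      refine ⟨ψ.comp (χ.comp (AddMonoidHom.mulLeft (w ^ p ^ ((k + 1) * n)))), ?_, ?_⟩
      · intro r x
        simp only [AddMonoidHom.comp_apply, AddMonoidHom.coe_mulLeft]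
        have hpow : (r ^ p ^ n) ^ p ^ ((k + 1) * n) = r ^ p ^ ((k + 1 + 1) * n) := by
          rw [← pow_mul, ← pow_add]
          congr 1
          congr 1
          ring
        have h1 : w ^ p ^ ((k + 1) * n) * (r ^ p ^ ((k + 1 + 1) * n) * x)
            = (r ^ p ^ n) ^ p ^ ((k + 1) * n) * (w ^ p ^ ((k + 1) * n) * x) := by
          rw [hpow]; ring
        rw [h1, hχ, hψ]
      · simp only [AddMonoidHom.comp_apply, AddMonoidHom.coe_mulLeft]
        rw [hχ w w, hχw, mul_one, hw]

/-- If `R` is a strongly `F`-regular finitely generated algebra over an algebraically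
closed field `k` of characteristic `p > 0`, then the polynomial ring `R[x]` (the tensor
product of `R` with the smooth `k`-algebra `k[x]`) is strongly `F`-regular. -/
theorem stmt18 (k : Type*) [Field k] [IsAlgClosed k]
    (p : ℕ) (hp : p.Prime) [CharP k p]
    (R : Type*) [CommRing R] [Algebra k R] [Algebra.FiniteType k R] [CharP R p]
    (h : StronglyFRegular p R) :
    StronglyFRegular p (Polynomial R) := by
  classical
  haveI : Fact p.Prime := ⟨hp⟩
  haveI : IsNoetherianRing R := Algebra.FiniteType.isNoetherianRing k R
  intro s hs
  have hfin : (minimalPrimes R).Finite := minimalPrimes.finite_of_isNoetherianRing R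
  set F : Finset (Ideal R) := hfin.toFinset with hF
  have hmemF : ∀ P : Ideal R, P ∈ F ↔ P ∈ minimalPrimes R := fun P => hfin.mem_toFinset
  have hprime : ∀ P ∈ F, P.IsPrime := fun P hP => ((hmemF P).mp hP).1.1
  -- `P.map C` is a minimal prime of `R[x]` for each minimal prime `P` of `R`.
  have hmapmin : ∀ P ∈ F,
      Ideal.map (Polynomial.C : R →+* Polynomial R) P ∈ minimalPrimes (Polynomial R) := by
    intro P hP
    have hPm := (hmemF P).mp hP
    have hPp : P.IsPrime := hPm.1.1
    refine ⟨⟨(by haveI := hPp; exact Ideal.isPrime_map_C_of_isPrime), bot_le⟩, ?_⟩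
    rintro Q ⟨hQp, -⟩ hQle
    haveI := hQp
    have hcomap : Ideal.comap (Polynomial.C : R →+* Polynomial R) Q ≤ P := by
      intro a ha
      have h1 : Polynomial.C a ∈ Ideal.map (Polynomial.C : R →+* Polynomial R) P := hQle ha
      have h2 := Ideal.mem_map_C_iff.mp h1 0
      simpa using h2
    haveI : (Ideal.comap (Polynomial.C : R →+* Polynomial R) Q).IsPrime := hQp.comap _
    obtain ⟨P', hP', hP'le⟩ := Ideal.exists_minimalPrimes_le
      (bot_le (a := Ideal.comap (Polynomial.C : R →+* Polynomial R) Q))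
    have hPP' : P ≤ P' := hPm.2 ⟨hP'.1.1, bot_le⟩ (hP'le.trans hcomap)
    exact Ideal.map_le_iff_le_comap.mpr (hPP'.trans hP'le)
  -- For each minimal prime, pick a coefficient of `s` outside of it.
  have hcoeff : ∀ P ∈ F, ∃ i, i ≤ s.natDegree ∧ s.coeff i ∉ P := by
    intro P hP
    have hsP := hs _ (hmapmin P hP)
    have hnall : ¬ ∀ m, s.coeff m ∈ P := fun hc => hsP (Ideal.mem_map_C_iff.mpr hc)
    push_neg at hnall
    obtain ⟨i, hi⟩ := hnall
    refine ⟨i, ?_, hi⟩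
    apply Polynomial.le_natDegree_of_ne_zero
    intro h0; exact hi (h0 ▸ P.zero_mem)
  -- For each minimal prime, pick a separating element.
  have hsep : ∀ P ∈ F, ∃ t, t ∉ P ∧ ∀ Q ∈ F, Q ≠ P → t ∈ Q := by
    intro P hP
    have hPp := hprime P hP
    have hnle : ¬ (F.erase P).inf id ≤ P := by
      intro hle
      obtain ⟨Q, hQ, hQle⟩ := (Ideal.IsPrime.inf_le' hPp).mp hle
      have hQF := Finset.mem_of_mem_erase hQ
      have hQne := Finset.ne_of_mem_erase hQ
      have hPQ : P ≤ Q := ((hmemF P).mp hP).2 ⟨hprime Q hQF, bot_le⟩ hQle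
      exact hQne (le_antisymm hQle hPQ)
    obtain ⟨t, ht1, ht2⟩ := SetLike.not_le_iff_exists.mp hnle
    refine ⟨t, ht2, fun Q hQ hne => ?_⟩
    exact Finset.inf_le (f := id) (Finset.mem_erase.mpr ⟨hne, hQ⟩) ht1
  choose idx hidx hidxP using hcoeff
  choose t ht hts using hsep
  set w : R := ∑ P ∈ F.attach, t P.1 P.2 * s.coeff (idx P.1 P.2) with hw
  -- `w` avoids every minimal prime of `R`.
  have hwnot : ∀ P ∈ minimalPrimes R, w ∉ P := by
    intro P hPm hwP
    have hPF : P ∈ F := (hmemF P).mpr hPm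
    have hPp := hprime P hPF
    have hsplit : w = t P hPF * s.coeff (idx P hPF)
        + ∑ Q ∈ F.attach.erase ⟨P, hPF⟩, t Q.1 Q.2 * s.coeff (idx Q.1 Q.2) := by
      rw [hw, ← Finset.add_sum_erase _ _ (Finset.mem_attach F ⟨P, hPF⟩)]
    have hrest : (∑ Q ∈ F.attach.erase ⟨P, hPF⟩, t Q.1 Q.2 * s.coeff (idx Q.1 Q.2)) ∈ P := by
      refine Ideal.sum_mem _ ?_
      rintro ⟨Q, hQF⟩ hQ
      have hne : P ≠ Q := by
        intro hEq
        exact (Finset.mem_erase.mp hQ).1 (Subtype.ext hEq.symm)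
      exact Ideal.mul_mem_right _ _ (hts Q hQF P hPF hne)
    have hterm : t P hPF * s.coeff (idx P hPF) ∈ P := by
      have heq : t P hPF * s.coeff (idx P hPF)
          = w - ∑ Q ∈ F.attach.erase ⟨P, hPF⟩, t Q.1 Q.2 * s.coeff (idx Q.1 Q.2) := by
        rw [hsplit]; ring
      rw [heq]
      exact Ideal.sub_mem _ hwP hrest
    rcases hPp.mem_or_mem hterm with h1 | h1
    · exact ht P hPF h1
    · exact hidxP P hPF h1
  obtain ⟨n, ψ, hn, hψ, hψw⟩ := h w hwnot
  obtain ⟨χ, hχ, hχw⟩ := amplify (p := p) w ψ hψ hψw s.natDegree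
  set e := (s.natDegree + 1) * n with he
  have he1 : 1 ≤ e := Nat.one_le_iff_ne_zero.mpr (by positivity)
  have hdeg : s.natDegree < p ^ e :=
    calc s.natDegree < s.natDegree + 1 := Nat.lt_succ_self _
      _ ≤ e := Nat.le_mul_of_pos_right _ hn
      _ < p ^ e := Nat.lt_pow_self hp.one_lt
  refine ⟨e, AddMonoidHom.mk'
    (fun f => ∑ P ∈ F.attach, psiFun χ (p ^ e) (idx P.1 P.2) (t P.1 P.2) f) ?_, he1, ?_, ?_⟩
  · intro a b
    rw [← Finset.sum_add_distrib]
    exact Finset.sum_congr rfl fun P _ => psiFun_add χ (p ^ e) _ _ a b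
  · intro r f
    simp only [AddMonoidHom.mk'_apply]
    rw [Finset.mul_sum]
    exact Finset.sum_congr rfl fun P _ => psiFun_twisted χ e _ _ hχ r f
  · simp only [AddMonoidHom.mk'_apply]
    have hvals : ∀ P ∈ F.attach, psiFun χ (p ^ e) (idx P.1 P.2) (t P.1 P.2) s
        = Polynomial.C (χ (t P.1 P.2 * s.coeff (idx P.1 P.2))) :=
      fun P _ => psiFun_eval χ (p ^ e) _ _ s hdeg
    rw [Finset.sum_congr rfl hvals, ← map_sum, ← map_sum, ← hw, hχw, map_one]
end
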